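/- For every odd positive integer p, the number T(p) of integer triangles with perimeter p equals the integer nearest to (p+3)²/48, i.e. T(p) = round((p+3)²/48). -/

import Mathlib

/-- `T p` is the number of integer triangles with perimeter `p`:
unordered triples of positive integers `a ≤ b ≤ c` with `a + b + c = p`
and `c < a + b`. -/
noncomputable def T (p : ℕ) : ℕ :=
  Nat.card {t : ℕ × ℕ × ℕ //
    0 < t.1 ∧ t.1 ≤ t.2.1 ∧ t.2.1 ≤ t.2.2 ∧ t.2.2 < t.1 + t.2.1 ∧ t.1 + t.2.1 + t.2.2 = p}

/-!
For odd `p` the substitution `x = (a + b - c + 1) / 2`, `y = (a + c - b + 1) / 2`,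
`z = (b + c - a + 1) / 2` is a bijection from the triangles of perimeter `p` onto the
partitions of `n = (p + 3) / 2` into three positive parts. Those are counted by
`p₃(n + 3) = p₃(n) + (⌊n / 2⌋ + 1)` (split on whether the smallest part is `1`), whose
solution is `p₃(n) = ⌊(n² + 6) / 12⌋ = round (n² / 12)`, and `n² / 12 = (p + 3)² / 48`.
-/

open Finset

theorem round_natCast_div_natCast {K : Type*} [Field K] [LinearOrder K] [IsStrictOrderedRing K]
    [FloorRing K] (m d : ℕ) : round ((m : K) / d) = ((2 * m + d) / (2 * d) : ℕ) := by
  rcases Nat.eq_zero_or_pos d with rfl | hd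
  · simp
  have hK : (m : K) / d + 1 / 2 = ((2 * m + d : ℕ) : K) / ((2 * d : ℕ) : K) := by
    push_cast; field_simp
  rw [round_eq, hK, ← Nat.floor_div_eq_div (K := K), Int.natCast_floor_eq_floor (by positivity)]

def triangles (p : ℕ) : Finset (ℕ × ℕ × ℕ) :=
  (range (p + 1) ×ˢ range (p + 1) ×ˢ range (p + 1)).filter fun t =>
    0 < t.1 ∧ t.1 ≤ t.2.1 ∧ t.2.1 ≤ t.2.2 ∧ t.2.2 < t.1 + t.2.1 ∧ t.1 + t.2.1 + t.2.2 = p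

def threePartitions (n : ℕ) : Finset (ℕ × ℕ × ℕ) :=
  (range (n + 1) ×ˢ range (n + 1) ×ˢ range (n + 1)).filter fun t =>
    0 < t.1 ∧ t.1 ≤ t.2.1 ∧ t.2.1 ≤ t.2.2 ∧ t.1 + t.2.1 + t.2.2 = n

theorem mem_triangles {p : ℕ} {t : ℕ × ℕ × ℕ} :
    t ∈ triangles p ↔
      0 < t.1 ∧ t.1 ≤ t.2.1 ∧ t.2.1 ≤ t.2.2 ∧ t.2.2 < t.1 + t.2.1 ∧ t.1 + t.2.1 + t.2.2 = p := by
  simp only [triangles, mem_filter, mem_product, mem_range]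
  omega

theorem mem_threePartitions {n : ℕ} {t : ℕ × ℕ × ℕ} :
    t ∈ threePartitions n ↔ 0 < t.1 ∧ t.1 ≤ t.2.1 ∧ t.2.1 ≤ t.2.2 ∧ t.1 + t.2.1 + t.2.2 = n := by
  simp only [threePartitions, mem_filter, mem_product, mem_range]
  omega

theorem T_eq_card_triangles (p : ℕ) : T p = #(triangles p) := by
  rw [T, Nat.card_congr (Equiv.subtypeEquivRight fun _ => mem_triangles.symm)]
  exact Nat.card_eq_finsetCard _

theorem card_triangles_of_odd {p : ℕ} (hp : Odd p) :
    #(triangles p) = #(threePartitions ((p + 3) / 2)) := by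
  obtain ⟨k, rfl⟩ := hp
  apply card_nbij'
    (fun t => ((t.1 + t.2.1 + 1 - t.2.2) / 2, (t.1 + t.2.2 + 1 - t.2.1) / 2,
      (t.2.1 + t.2.2 + 1 - t.1) / 2))
    (fun t => (t.1 + t.2.1 - 1, t.1 + t.2.2 - 1, t.2.1 + t.2.2 - 1))
  · intro t ht
    simp only [mem_coe, mem_threePartitions, mem_triangles] at ht ⊢
    omega
  · intro t ht
    simp only [mem_coe, mem_threePartitions, mem_triangles] at ht ⊢
    omega
  · intro t ht
    simp only [mem_coe, mem_triangles] at ht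
    ext <;> dsimp only <;> omega
  · intro t ht
    simp only [mem_coe, mem_threePartitions] at ht
    ext <;> dsimp only <;> omega

theorem card_filter_one_lt_threePartitions_add_three (n : ℕ) :
    #((threePartitions (n + 3)).filter fun t => 1 < t.1) = #(threePartitions n) := by
  apply card_nbij' (fun t => (t.1 - 1, t.2.1 - 1, t.2.2 - 1))
    (fun t => (t.1 + 1, t.2.1 + 1, t.2.2 + 1))
  · intro t ht
    simp only [mem_coe, mem_filter, mem_threePartitions] at ht ⊢
    omega
  · intro t ht
    simp only [mem_coe, mem_filter, mem_threePartitions] at ht ⊢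
    omega
  · intro t ht
    simp only [mem_coe, mem_filter, mem_threePartitions] at ht
    ext <;> dsimp only <;> omega
  · intro t _
    ext <;> dsimp only <;> omega

theorem card_filter_not_one_lt_threePartitions_add_three (n : ℕ) :
    #((threePartitions (n + 3)).filter fun t => ¬1 < t.1) = n / 2 + 1 := by
  rw [← card_range (n / 2 + 1)]
  apply card_nbij' (fun t => t.2.1 - 1) (fun v => (1, v + 1, n + 1 - v))
  · intro t ht
    simp only [mem_coe, mem_filter, mem_range, mem_threePartitions] at ht ⊢
    omega
  · intro v hv
    simp only [mem_coe, mem_filter, mem_range, mem_threePartitions] at hv ⊢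
    omega
  · intro t ht
    simp only [mem_coe, mem_filter, mem_threePartitions] at ht
    ext <;> dsimp only <;> omega
  · intro v _
    dsimp only
    omega

theorem card_threePartitions_add_three (n : ℕ) :
    #(threePartitions (n + 3)) = #(threePartitions n) + (n / 2 + 1) := by
  rw [← card_filter_add_card_filter_not (p := fun t => 1 < t.1),
    card_filter_one_lt_threePartitions_add_three, card_filter_not_one_lt_threePartitions_add_three]

theorem add_three_sq_add_six_div_twelve (n : ℕ) :
    ((n + 3) ^ 2 + 6) / 12 = (n ^ 2 + 6) / 12 + (n / 2 + 1) := by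
  obtain ⟨q, r, hr, rfl⟩ : ∃ q r, r < 6 ∧ n = 6 * q + r :=
    ⟨n / 6, n % 6, Nat.mod_lt _ (by norm_num), (Nat.div_add_mod n 6).symm⟩
  interval_cases r <;>
    · ring_nf
      omega

theorem card_threePartitions (n : ℕ) : #(threePartitions n) = (n ^ 2 + 6) / 12 := by
  induction n using Nat.strong_induction_on with
  | _ n ih =>
    match n with
    | 0 | 1 | 2 => decide
    | m + 3 => rw [card_threePartitions_add_three, ih m (by omega), add_three_sq_add_six_div_twelve]

theorem integer_triangles_odd_perimeter_general (p : ℕ) (hodd : Odd p) :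
    (T p : ℤ) = round (((p : ℚ) + 3) ^ 2 / 48) := by
  obtain ⟨n, hn⟩ : ∃ n, p + 3 = 2 * n := by
    obtain ⟨k, rfl⟩ := hodd
    exact ⟨k + 2, by ring⟩
  have hsq : ((p : ℚ) + 3) ^ 2 / 48 = ((n ^ 2 : ℕ) : ℚ) / (12 : ℕ) := by
    rw [show (p : ℚ) + 3 = ((p + 3 : ℕ) : ℚ) by push_cast; rfl, hn]
    push_cast
    ring
  rw [T_eq_card_triangles, card_triangles_of_odd hodd, card_threePartitions, hsq,
    round_natCast_div_natCast, show (p + 3) / 2 = n by omega]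
  congr 1
  omega

theorem integer_triangles_odd_perimeter (p : ℕ) (hp : 0 < p) (hodd : Odd p) :
    (T p : ℤ) = round (((p : ℚ) + 3) ^ 2 / 48) :=
  integer_triangles_odd_perimeter_general p hodd
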